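/- Let Φ be an irreducible crystallographic root system with lacing number ℓ = max{(α,α)/(β,β) : α,β ∈ Φ}. A root γ = Σ_{α∈Π} c_α α is long if and only if, for every short simple root α, the coefficient c_α is divisible by ℓ. -/

import Mathlib

/-!
Let `L` and `S` be the largest and smallest squared root lengths, so `ℓ = L / S`. For
non-orthogonal roots `x`, `y` with `y` shorter, the Cartan integers `⟨x, y^∨⟩ = pairing x y`
satisfy `⟨y, x^∨⟩ = ±1` and `⟪x, x⟫ / ⟪y, y⟫ = ⟨x, y^∨⟩ ⟨y, x^∨⟩ ∈ {2, 3}`. By irreducibility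
every root meets a root of any given length non-orthogonally, so any two distinct squared
lengths have ratio `2` or `3`; hence there are only the lengths `L` and `S`, and
`⟨x, a^∨⟩ ∈ ℓℤ` for every long root `x` and short root `a`.

If `γ` is long and positive, reflecting it in a simple root `β` with `⟪γ, β⟫ > 0` lowers its
height and changes only the coordinate at `β`, by `⟨γ, β^∨⟩`; by induction the coordinates at
short simple roots stay in `ℓℤ`. Conversely, for a short root `b` and a long root `z` not
orthogonal to it, `z - s_b z = ±ℓ b`, so the divisibility condition puts `γ` in the lattice
spanned by the long roots. That lattice is integral for `⟪·, ·⟫ / L`, hence `⟪γ, γ⟫ = L`.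
-/

open scoped RealInnerProductSpace
attribute [local instance] Classical.propDecidable

variable {E : Type*} [NormedAddCommGroup E] [InnerProductSpace ℝ E] [FiniteDimensional ℝ E]

/-- A finite reduced crystallographic root system spanning `E`. -/
structure IsRootSystem (Φ : Finset E) : Prop where
  nonzero : ∀ γ ∈ Φ, γ ≠ (0 : E)
  span_top : Submodule.span ℝ (Φ : Set E) = ⊤
  reduced : ∀ γ ∈ Φ, ∀ t : ℝ, t • γ ∈ Φ → t = 1 ∨ t = -1
  reflect : ∀ γ ∈ Φ, ∀ δ ∈ Φ, δ - (2 * ⟪δ, γ⟫ / ⟪γ, γ⟫) • γ ∈ Φ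
  cry : ∀ γ ∈ Φ, ∀ δ ∈ Φ, ∃ n : ℤ, 2 * ⟪δ, γ⟫ / ⟪γ, γ⟫ = (n : ℝ)

/-- `Δ` is a simple system (base) for `Φ`, and `c γ a` is the coordinate of `γ`
on the simple root `a`. -/
structure IsBase (Φ Δ : Finset E) (c : E → E → ℝ) : Prop where
  subset : Δ ⊆ Φ
  indep : LinearIndependent ℝ (fun x : (Δ : Set E) => (x : E))
  repr : ∀ γ ∈ Φ, γ = ∑ a ∈ Δ, c γ a • a
  int : ∀ γ ∈ Φ, ∀ a ∈ Δ, ∃ n : ℤ, c γ a = (n : ℝ)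
  sign : ∀ γ ∈ Φ, (∀ a ∈ Δ, 0 ≤ c γ a) ∨ (∀ a ∈ Δ, c γ a ≤ 0)

/-- Irreducibility: no splitting into two nonempty mutually orthogonal parts. -/
def IsIrredSys (Φ : Finset E) : Prop :=
  ∀ s : Set E, s ⊆ (Φ : Set E) → (∀ x ∈ s, ∀ y ∈ (Φ : Set E) \ s, ⟪x, y⟫ = 0) →
    s = ∅ ∨ s = (Φ : Set E)

open AddSubgroup (zmultiples)

noncomputable section

variable {V : Type*} [NormedAddCommGroup V] [InnerProductSpace ℝ V]

def pairing (x a : V) : ℝ := 2 * ⟪x, a⟫ / ⟪a, a⟫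

def reflection (a x : V) : V := x - pairing x a • a

lemma pairing_mul_inner_self {a : V} (ha : a ≠ 0) (x : V) :
    pairing x a * ⟪a, a⟫ = 2 * ⟪x, a⟫ :=
  div_mul_cancel₀ _ (inner_self_ne_zero.mpr ha)

lemma sub_reflection (a x : V) : x - reflection a x = pairing x a • a :=
  sub_sub_cancel _ _

lemma inner_self_reflection {a : V} (ha : a ≠ 0) (x : V) :
    ⟪reflection a x, reflection a x⟫ = ⟪x, x⟫ := by
  have h := pairing_mul_inner_self ha x
  simp only [reflection, inner_sub_left, inner_sub_right, real_inner_smul_left,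
    real_inner_smul_right, real_inner_comm x a]
  linear_combination (pairing x a) * h

lemma norm_le_norm_iff_inner_self_le (x y : V) : ‖x‖ ≤ ‖y‖ ↔ ⟪x, x⟫ ≤ ⟪y, y⟫ := by
  rw [real_inner_self_eq_norm_sq, real_inner_self_eq_norm_sq,
    sq_le_sq₀ (norm_nonneg x) (norm_nonneg y)]

lemma norm_lt_norm_iff_inner_self_lt (x y : V) : ‖x‖ < ‖y‖ ↔ ⟪x, x⟫ < ⟪y, y⟫ := by
  simpa only [not_le] using (norm_le_norm_iff_inner_self_le y x).not

lemma inner_self_mem_zmultiples_of_mem_closure {S : Set V} {L : ℝ}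
    (hpair : ∀ z ∈ S, ∀ w ∈ S, 2 * ⟪z, w⟫ ∈ zmultiples L)
    (hself : ∀ z ∈ S, ⟪z, z⟫ ∈ zmultiples L) {x : V} (hx : x ∈ AddSubgroup.closure S) :
    ⟪x, x⟫ ∈ zmultiples L := by
  have two_inner : ∀ x ∈ AddSubgroup.closure S, ∀ y ∈ AddSubgroup.closure S,
      2 * ⟪x, y⟫ ∈ zmultiples L := by
    intro x hx y hy
    induction hx, hy using AddSubgroup.closure_induction₂ with
    | mem z w hz hw => exact hpair z hz w hw
    | zero_left | zero_right => simp
    | add_left x y z _ _ _ hxz hyz =>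
      rw [inner_add_left, mul_add]; exact add_mem hxz hyz
    | add_right y z x _ _ _ hxy hxz =>
      rw [inner_add_right, mul_add]; exact add_mem hxy hxz
    | neg_left x y _ _ h => rw [inner_neg_left, mul_neg]; exact neg_mem h
    | neg_right x y _ _ h => rw [inner_neg_right, mul_neg]; exact neg_mem h
  induction hx using AddSubgroup.closure_induction with
  | mem z hz => exact hself z hz
  | zero => simp
  | add x y hx hy hxx hyy =>
    have h : ⟪x + y, x + y⟫ = ⟪x, x⟫ + ⟪y, y⟫ + 2 * ⟪x, y⟫ := by
      rw [inner_add_left, inner_add_right, inner_add_right, real_inner_comm x y]; ring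
    rw [h]
    exact add_mem (add_mem hxx hyy) (two_inner x hx y hy)
  | neg x _ h => rwa [inner_neg_neg]

lemma inner_eq_zero_of_mem_span {s : Set V} {v u : V} (h : ∀ z ∈ s, ⟪v, z⟫ = 0)
    (hu : u ∈ Submodule.span ℝ s) : ⟪v, u⟫ = 0 :=
  Submodule.mem_orthogonal_singleton_iff_inner_right.mp <|
    Submodule.span_le.mpr (fun z hz => Submodule.mem_orthogonal_singleton_iff_inner_right.mpr
      (h z hz)) hu

lemma ne_of_inner_self_lt {x y : V} (h : ⟪y, y⟫ < ⟪x, x⟫) : x ≠ y := by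
  rintro rfl
  exact h.false

lemma ne_neg_of_inner_self_lt {x y : V} (h : ⟪y, y⟫ < ⟪x, x⟫) : x ≠ -y := by
  rintro rfl
  rw [inner_neg_neg] at h
  exact h.false

def rootsOfInnerSelf (Φ : Finset V) (L : ℝ) : Set V :=
  {z | z ∈ Φ ∧ ⟪z, z⟫ = L}

namespace IsRootSystem

variable {Φ : Finset V} {x y a : V}

lemma inner_self_pos (hΦ : IsRootSystem Φ) (hx : x ∈ Φ) : 0 < ⟪x, x⟫ :=
  real_inner_self_pos.mpr (hΦ.nonzero x hx)

lemma reflection_mem (hΦ : IsRootSystem Φ) (ha : a ∈ Φ) (hx : x ∈ Φ) : reflection a x ∈ Φ :=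
  hΦ.reflect a ha x hx

lemma inner_self_reflection (hΦ : IsRootSystem Φ) (ha : a ∈ Φ) (x : V) :
    ⟪reflection a x, reflection a x⟫ = ⟪x, x⟫ :=
  _root_.inner_self_reflection (hΦ.nonzero a ha) x

lemma neg_mem (hΦ : IsRootSystem Φ) (hx : x ∈ Φ) : -x ∈ Φ := by
  have h := hΦ.reflection_mem hx hx
  rwa [reflection, pairing, mul_div_assoc, div_self (hΦ.inner_self_pos hx).ne', mul_one,
    two_smul, sub_add_cancel_left] at h

lemma exists_int_pairing (hΦ : IsRootSystem Φ) (hx : x ∈ Φ) (ha : a ∈ Φ) :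
    ∃ n : ℤ, pairing x a = n :=
  hΦ.cry a ha x hx

lemma one_le_pairing (hΦ : IsRootSystem Φ) (hx : x ∈ Φ) (ha : a ∈ Φ) (h : 0 < ⟪x, a⟫) :
    1 ≤ pairing x a := by
  obtain ⟨n, hn⟩ := hΦ.exists_int_pairing hx ha
  have hpos : (0 : ℝ) < n := hn ▸ div_pos (by linarith) (hΦ.inner_self_pos ha)
  have : 1 ≤ n := Int.cast_pos.mp hpos
  rw [hn]
  exact_mod_cast this

lemma sq_inner_lt (hΦ : IsRootSystem Φ) (hx : x ∈ Φ) (hy : y ∈ Φ) (hne : x ≠ y)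
    (hne' : x ≠ -y) : ⟪x, y⟫ ^ 2 < ⟪x, x⟫ * ⟪y, y⟫ := by
  have hlt : |⟪x, y⟫| < ‖x‖ * ‖y‖ := by
    refine (abs_real_inner_le_norm x y).lt_of_ne fun h => ?_
    obtain ⟨r, -, rfl⟩ := (norm_inner_eq_norm_iff (𝕜 := ℝ) (hΦ.nonzero x hx)
      (hΦ.nonzero _ hy)).mp h
    rcases hΦ.reduced x hx r hy with rfl | rfl
    · exact hne (one_smul ℝ x).symm
    · exact hne' (by rw [neg_one_smul, neg_neg])
  rw [real_inner_self_eq_norm_sq, real_inner_self_eq_norm_sq, ← mul_pow, sq_lt_sq,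
    abs_of_nonneg (mul_nonneg (norm_nonneg x) (norm_nonneg y))]
  exact hlt

lemma pairing_mul_pairing_lt_four (hΦ : IsRootSystem Φ) (hx : x ∈ Φ) (hy : y ∈ Φ)
    (hne : x ≠ y) (hne' : x ≠ -y) : pairing x y * pairing y x < 4 := by
  have hxx := hΦ.inner_self_pos hx
  have hyy := hΦ.inner_self_pos hy
  have h := hΦ.sq_inner_lt hx hy hne hne'
  rw [pairing, pairing, real_inner_comm x y, div_mul_div_comm, div_lt_iff₀ (by positivity)]
  nlinarith

lemma pairing_eq_one_or_neg_one_of_lt (hΦ : IsRootSystem Φ) (hx : x ∈ Φ) (hy : y ∈ Φ)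
    (hlt : ⟪y, y⟫ < ⟪x, x⟫) (hxy : ⟪x, y⟫ ≠ 0) : pairing y x = 1 ∨ pairing y x = -1 := by
  obtain ⟨n, hn⟩ := hΦ.exists_int_pairing hx hy
  obtain ⟨m, hm⟩ := hΦ.exists_int_pairing hy hx
  have hyy := hΦ.inner_self_pos hy
  have hcross : (n : ℝ) * ⟪y, y⟫ = m * ⟪x, x⟫ := by
    rw [← hn, ← hm, pairing_mul_inner_self (hΦ.nonzero y hy),
      pairing_mul_inner_self (hΦ.nonzero x hx), real_inner_comm]
  have hm0 : (m : ℝ) ≠ 0 := by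
    rw [← hm, pairing, real_inner_comm]
    exact div_ne_zero (mul_ne_zero two_ne_zero hxy) (hΦ.inner_self_pos hx).ne'
  have hlt4 : (n : ℝ) * m < 4 := by
    rw [← hn, ← hm]
    exact hΦ.pairing_mul_pairing_lt_four hx hy (ne_of_inner_self_lt hlt)
      (ne_neg_of_inner_self_lt hlt)
  have hsq : (m : ℝ) ^ 2 < n * m := by
    have hmul : (n * m : ℝ) * ⟪y, y⟫ = m ^ 2 * ⟪x, x⟫ := by linear_combination m * hcross
    have : (m : ℝ) ^ 2 * ⟪y, y⟫ < m ^ 2 * ⟪x, x⟫ := by gcongr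
    exact lt_of_mul_lt_mul_right (hmul ▸ this) hyy.le
  have hsq' : m ^ 2 < 4 := by exact_mod_cast hsq.trans hlt4
  have hm0' : m ≠ 0 := by exact_mod_cast hm0
  have : m = 1 ∨ m = -1 := by
    have : -2 < m := by nlinarith
    have : m < 2 := by nlinarith
    omega
  rcases this with rfl | rfl <;> simp [hm]

lemma inner_self_div_eq_pairing_mul_pairing (hΦ : IsRootSystem Φ) (hx : x ∈ Φ) (hy : y ∈ Φ)
    (hlt : ⟪y, y⟫ < ⟪x, x⟫) (hxy : ⟪x, y⟫ ≠ 0) :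
    ⟪x, x⟫ / ⟪y, y⟫ = pairing x y * pairing y x := by
  have hcross : pairing x y * ⟪y, y⟫ = pairing y x * ⟪x, x⟫ := by
    rw [pairing_mul_inner_self (hΦ.nonzero y hy), pairing_mul_inner_self (hΦ.nonzero x hx),
      real_inner_comm]
  rw [div_eq_iff (hΦ.inner_self_pos hy).ne']
  rcases hΦ.pairing_eq_one_or_neg_one_of_lt hx hy hlt hxy with h | h <;> rw [h] at hcross ⊢ <;>
    linarith

lemma pairing_eq_or_eq_neg_of_lt (hΦ : IsRootSystem Φ) (hx : x ∈ Φ) (hy : y ∈ Φ)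
    (hlt : ⟪y, y⟫ < ⟪x, x⟫) (hxy : ⟪x, y⟫ ≠ 0) :
    pairing x y = ⟪x, x⟫ / ⟪y, y⟫ ∨ pairing x y = -(⟪x, x⟫ / ⟪y, y⟫) := by
  rw [hΦ.inner_self_div_eq_pairing_mul_pairing hx hy hlt hxy]
  rcases hΦ.pairing_eq_one_or_neg_one_of_lt hx hy hlt hxy with h | h <;> rw [h] <;> simp

lemma pairing_mem_zmultiples_of_lt (hΦ : IsRootSystem Φ) (hx : x ∈ Φ) (hy : y ∈ Φ)
    (hlt : ⟪y, y⟫ < ⟪x, x⟫) : pairing x y ∈ zmultiples (⟪x, x⟫ / ⟪y, y⟫) := by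
  by_cases hxy : ⟪x, y⟫ = 0
  · simp [pairing, hxy]
  rcases hΦ.pairing_eq_or_eq_neg_of_lt hx hy hlt hxy with h | h <;> rw [h]
  · exact AddSubgroup.mem_zmultiples _
  · exact AddSubgroup.neg_mem _ (AddSubgroup.mem_zmultiples _)

lemma inner_self_eq_two_mul_or_three_mul (hΦ : IsRootSystem Φ) (hx : x ∈ Φ) (hy : y ∈ Φ)
    (hlt : ⟪y, y⟫ < ⟪x, x⟫) (hxy : ⟪x, y⟫ ≠ 0) :
    ⟪x, x⟫ = 2 * ⟪y, y⟫ ∨ ⟪x, x⟫ = 3 * ⟪y, y⟫ := by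
  have hyy := hΦ.inner_self_pos hy
  have hratio := hΦ.inner_self_div_eq_pairing_mul_pairing hx hy hlt hxy
  obtain ⟨n, hn⟩ := hΦ.exists_int_pairing hx hy
  obtain ⟨m, hm⟩ := hΦ.exists_int_pairing hy hx
  have hratio' : ⟪x, x⟫ / ⟪y, y⟫ = (n * m : ℤ) := by rw [hratio, hn, hm, Int.cast_mul]
  have hgt : (1 : ℤ) < n * m := by exact_mod_cast hratio' ▸ (one_lt_div hyy).mpr hlt
  have hlt4 : n * m < (4 : ℤ) := by
    have := hΦ.pairing_mul_pairing_lt_four hx hy (ne_of_inner_self_lt hlt)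
      (ne_neg_of_inner_self_lt hlt)
    rw [hn, hm] at this
    exact_mod_cast this
  rw [← div_eq_iff hyy.ne', ← div_eq_iff hyy.ne', hratio']
  have : n * m = 2 ∨ n * m = 3 := by omega
  rcases this with h | h <;> simp [h]

end IsRootSystem

namespace IsIrredSys

variable {Φ : Finset V} {x y z : V}

/-- By irreducibility the span of `O` contains every root. -/
lemma exists_inner_ne_zero (hΦ : IsRootSystem Φ) (hirr : IsIrredSys Φ) {O : Set V}
    (hO : O ⊆ Φ) (hstable : ∀ a ∈ Φ, ∀ z ∈ O, reflection a z ∈ O) (hx : x ∈ O) (hy : y ∈ Φ) :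
    ∃ z ∈ O, ⟪z, y⟫ ≠ 0 := by
  set U := Submodule.span ℝ O
  have horth : ∀ δ ∈ Φ, δ ∉ U → ∀ z ∈ O, ⟪δ, z⟫ = 0 := by
    intro δ hδ hδU z hz
    -- otherwise `δ` is a multiple of `z - s_δ z ∈ U`
    by_contra h
    have hp : pairing z δ ≠ 0 :=
      div_ne_zero (mul_ne_zero two_ne_zero (by rwa [real_inner_comm])) (hΦ.inner_self_pos hδ).ne'
    refine hδU ?_
    rw [← inv_smul_smul₀ hp δ, ← sub_reflection]
    exact U.smul_mem _ (U.sub_mem (Submodule.subset_span hz)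
      (Submodule.subset_span (hstable δ hδ z hz)))
  rcases hirr {w | w ∈ Φ ∧ w ∈ U} (fun w hw => hw.1)
      (fun w hw δ hδ => real_inner_comm δ w ▸
        inner_eq_zero_of_mem_span (horth δ hδ.1 fun h => hδ.2 ⟨hδ.1, h⟩) hw.2) with h | h
  · have hxU : x ∈ {w | w ∈ Φ ∧ w ∈ U} := ⟨hO hx, Submodule.subset_span hx⟩
    rw [h] at hxU
    exact hxU.elim
  · by_contra! hy0
    have hyU : y ∈ U := (h.symm ▸ hy : y ∈ {w | w ∈ Φ ∧ w ∈ U}).2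
    refine (hΦ.inner_self_pos hy).ne' (inner_eq_zero_of_mem_span (fun z hz => ?_) hyU)
    rw [real_inner_comm]
    exact hy0 z hz

lemma exists_inner_self_eq_inner_ne_zero (hΦ : IsRootSystem Φ) (hirr : IsIrredSys Φ)
    (hx : x ∈ Φ) (hy : y ∈ Φ) : ∃ z ∈ Φ, ⟪z, z⟫ = ⟪x, x⟫ ∧ ⟪z, y⟫ ≠ 0 := by
  obtain ⟨z, ⟨hz, hzx⟩, hzy⟩ := hirr.exists_inner_ne_zero hΦ (O := {z | z ∈ Φ ∧ ⟪z, z⟫ = ⟪x, x⟫})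
    (fun _ hz => hz.1)
    (fun a ha z hz => ⟨hΦ.reflection_mem ha hz.1, (hΦ.inner_self_reflection ha z).trans hz.2⟩)
    ⟨hx, rfl⟩ hy
  exact ⟨z, hz, hzx, hzy⟩

lemma inner_self_eq_two_mul_or_three_mul (hΦ : IsRootSystem Φ) (hirr : IsIrredSys Φ)
    (hx : x ∈ Φ) (hy : y ∈ Φ) (hlt : ⟪y, y⟫ < ⟪x, x⟫) :
    ⟪x, x⟫ = 2 * ⟪y, y⟫ ∨ ⟪x, x⟫ = 3 * ⟪y, y⟫ := by
  obtain ⟨z, hz, hzx, hzy⟩ := hirr.exists_inner_self_eq_inner_ne_zero hΦ hx hy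
  rw [← hzx] at hlt ⊢
  exact hΦ.inner_self_eq_two_mul_or_three_mul hz hy hlt hzy

/-- A squared length strictly between the extremes would make their ratio at least `4`. -/
lemma inner_self_eq_or_eq (hΦ : IsRootSystem Φ) (hirr : IsIrredSys Φ) (hx : x ∈ Φ)
    (hy : y ∈ Φ) (hmin : ∀ w ∈ Φ, ⟪x, x⟫ ≤ ⟪w, w⟫) (hmax : ∀ w ∈ Φ, ⟪w, w⟫ ≤ ⟪y, y⟫)
    (hz : z ∈ Φ) : ⟪z, z⟫ = ⟪x, x⟫ ∨ ⟪z, z⟫ = ⟪y, y⟫ := by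
  by_contra! h
  have hxz := lt_of_le_of_ne (hmin z hz) h.1.symm
  have hzy := lt_of_le_of_ne (hmax z hz) h.2
  have hxx := hΦ.inner_self_pos hx
  rcases hirr.inner_self_eq_two_mul_or_three_mul hΦ hz hx hxz with h1 | h1 <;>
  rcases hirr.inner_self_eq_two_mul_or_three_mul hΦ hy hz hzy with h2 | h2 <;>
  rcases hirr.inner_self_eq_two_mul_or_three_mul hΦ hy hx (hxz.trans hzy) with h3 | h3 <;>
  linarith

end IsIrredSys

namespace IsBase

variable {Φ Δ : Finset V} {c : V → V → ℝ} {γ β : V}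

lemma coord_eq (hB : IsBase Φ Δ c) (hγ : γ ∈ Φ) (f : V → ℝ) (h : ∑ a ∈ Δ, f a • a = γ) :
    ∀ a ∈ Δ, c γ a = f a :=
  (linearIndepOn_finset_iffₛ (v := id)).mp hB.indep _ _
    (by simpa only [id, h] using (hB.repr γ hγ).symm)

lemma coord_self (hB : IsBase Φ Δ c) (hβ : β ∈ Δ) :
    ∀ a ∈ Δ, c β a = if a = β then 1 else 0 :=
  hB.coord_eq (hB.subset hβ) _ (by simp [ite_smul, hβ])

lemma coord_neg (hΦ : IsRootSystem Φ) (hB : IsBase Φ Δ c) (hγ : γ ∈ Φ) :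
    ∀ a ∈ Δ, c (-γ) a = -c γ a :=
  hB.coord_eq (hΦ.neg_mem hγ) _ (by simp only [neg_smul, Finset.sum_neg_distrib, ← hB.repr γ hγ])

lemma coord_reflection (hΦ : IsRootSystem Φ) (hB : IsBase Φ Δ c) (hγ : γ ∈ Φ) (hβ : β ∈ Δ) :
    ∀ a ∈ Δ, c (reflection β γ) a = c γ a - if a = β then pairing γ β else 0 :=
  hB.coord_eq (hΦ.reflection_mem (hB.subset hβ) hγ) _ (by
    simp only [sub_smul, Finset.sum_sub_distrib, ite_smul, zero_smul, Finset.sum_ite_eq', hβ,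
      if_true, ← hB.repr γ hγ, reflection])

lemma exists_inner_pos (hΦ : IsRootSystem Φ) (hB : IsBase Φ Δ c) (hγ : γ ∈ Φ)
    (hpos : ∀ a ∈ Δ, 0 ≤ c γ a) : ∃ β ∈ Δ, 0 < ⟪γ, β⟫ := by
  by_contra! h
  have hexp : ⟪γ, γ⟫ = ∑ a ∈ Δ, c γ a * ⟪γ, a⟫ := by
    nth_rw 2 [hB.repr γ hγ]
    simp only [inner_sum, real_inner_smul_right]
  have : ⟪γ, γ⟫ ≤ 0 :=
    hexp ▸ Finset.sum_nonpos fun a ha => mul_nonpos_of_nonneg_of_nonpos (hpos a ha) (h a ha)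
  exact this.not_gt (hΦ.inner_self_pos hγ)

lemma coord_reflection_nonneg (hΦ : IsRootSystem Φ) (hB : IsBase Φ Δ c) (hγ : γ ∈ Φ)
    (hpos : ∀ a ∈ Δ, 0 ≤ c γ a) (hγΔ : γ ∉ Δ) (hβ : β ∈ Δ) (hγβ : 0 < ⟪γ, β⟫) :
    ∀ a ∈ Δ, 0 ≤ c (reflection β γ) a := by
  have hcoord := hB.coord_reflection hΦ hγ hβ
  -- otherwise `γ` would be a multiple of `β`
  refine (hB.sign _ (hΦ.reflection_mem (hB.subset hβ) hγ)).resolve_right fun hneg => ?_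
  have hzero : ∀ a ∈ Δ, a ≠ β → c γ a = 0 := fun a ha haβ =>
    le_antisymm (by simpa [hcoord a ha, haβ] using hneg a ha) (hpos a ha)
  have hγ_eq : c γ β • β = γ := by
    rw [← Finset.sum_eq_single_of_mem (f := fun a => c γ a • a) β hβ
      (fun a ha haβ => by rw [hzero a ha haβ, zero_smul]), ← hB.repr γ hγ]
  rcases hΦ.reduced β (hB.subset hβ) _ (hγ_eq ▸ hγ) with h | h <;> rw [h] at hγ_eq
  · exact hγΔ (by rwa [← hγ_eq, one_smul])
  · rw [← hγ_eq, neg_one_smul, inner_neg_left] at hγβ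
    linarith [hΦ.inner_self_pos (hB.subset hβ)]

theorem induction_on_pos (hΦ : IsRootSystem Φ) (hB : IsBase Φ Δ c) {Q : V → Prop}
    (simple : ∀ β ∈ Δ, Q β) (step : ∀ γ ∈ Φ, ∀ β ∈ Δ, Q (reflection β γ) → Q γ)
    (hγ : γ ∈ Φ) (hpos : ∀ a ∈ Δ, 0 ≤ c γ a) : Q γ := by
  obtain ⟨n, hn⟩ := exists_nat_gt (∑ a ∈ Δ, c γ a)
  induction n generalizing γ with
  | zero => exact absurd (Finset.sum_nonneg hpos) (by simpa using hn)
  | succ n ih =>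
    by_cases hγΔ : γ ∈ Δ
    · exact simple γ hγΔ
    obtain ⟨β, hβ, hγβ⟩ := hB.exists_inner_pos hΦ hγ hpos
    refine step γ hγ β hβ (ih (hΦ.reflection_mem (hB.subset hβ) hγ)
      (hB.coord_reflection_nonneg hΦ hγ hpos hγΔ hβ hγβ) ?_)
    rw [Finset.sum_congr rfl (hB.coord_reflection hΦ hγ hβ), Finset.sum_sub_distrib,
      Finset.sum_ite_eq', if_pos hβ]
    push_cast at hn
    linarith [hΦ.one_le_pairing hγ (hB.subset hβ) hγβ]

end IsBase

section

variable {Φ Δ : Finset V} {c : V → V → ℝ} {γ : V} {L ℓ : ℝ}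

theorem IsBase.coord_mem_zmultiples (hΦ : IsRootSystem Φ) (hB : IsBase Φ Δ c)
    (hpair : ∀ x ∈ Φ, ⟪x, x⟫ = L → ∀ a ∈ Δ, ⟪a, a⟫ < L → pairing x a ∈ zmultiples ℓ)
    (hγ : γ ∈ Φ) (hγL : ⟪γ, γ⟫ = L) : ∀ a ∈ Δ, ⟪a, a⟫ < L → c γ a ∈ zmultiples ℓ := by
  suffices key : ∀ γ ∈ Φ, (∀ a ∈ Δ, 0 ≤ c γ a) →
      ⟪γ, γ⟫ = L → ∀ a ∈ Δ, ⟪a, a⟫ < L → c γ a ∈ zmultiples ℓ by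
    rcases hB.sign γ hγ with hpos | hneg
    · exact key γ hγ hpos hγL
    · intro a ha haL
      have h := key (-γ) (hΦ.neg_mem hγ)
        (fun b hb => by linarith [hB.coord_neg hΦ hγ b hb, hneg b hb])
        (by rwa [inner_neg_neg]) a ha haL
      simpa [hB.coord_neg hΦ hγ a ha] using h
  intro γ hγ hpos
  refine hB.induction_on_pos hΦ
    (Q := fun γ => ⟪γ, γ⟫ = L → ∀ a ∈ Δ, ⟪a, a⟫ < L → c γ a ∈ zmultiples ℓ)
    (fun β hβ hβL a ha haL => ?_) (fun γ hγ β hβ ih hγL a ha haL => ?_) hγ hpos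
  · rw [hB.coord_self hβ a ha, if_neg (by rintro rfl; exact haL.ne hβL)]
    exact zero_mem _
  · have h := ih (by rwa [hΦ.inner_self_reflection (hB.subset hβ)]) a ha haL
    rw [hB.coord_reflection hΦ hγ hβ a ha] at h
    have hite : (if a = β then pairing γ β else 0) ∈ zmultiples ℓ := by
      split_ifs with haβ
      · exact hpair γ hγ hγL β hβ (haβ ▸ haL)
      · exact zero_mem _
    simpa using add_mem h hite

theorem IsBase.mem_closure_of_coord_mem_zmultiples (hB : IsBase Φ Δ c)
    (hmax : ∀ x ∈ Φ, ⟪x, x⟫ ≤ L)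
    (hsmul : ∀ a ∈ Δ, ⟪a, a⟫ < L → ℓ • a ∈ AddSubgroup.closure (rootsOfInnerSelf Φ L))
    (hγ : γ ∈ Φ) (hdiv : ∀ a ∈ Δ, ⟪a, a⟫ < L → c γ a ∈ zmultiples ℓ) :
    γ ∈ AddSubgroup.closure (rootsOfInnerSelf Φ L) := by
  rw [hB.repr γ hγ]
  refine AddSubgroup.sum_mem _ fun a ha => ?_
  rcases (hmax a (hB.subset ha)).lt_or_eq with hlt | heq
  · obtain ⟨k, hk⟩ := hdiv a ha hlt
    rw [← hk, smul_assoc]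
    exact AddSubgroup.zsmul_mem _ (hsmul a ha hlt) k
  · obtain ⟨k, hk⟩ := hB.int γ hγ a ha
    rw [hk, Int.cast_smul_eq_zsmul]
    have ha' : a ∈ rootsOfInnerSelf Φ L := ⟨hB.subset ha, heq⟩
    exact AddSubgroup.zsmul_mem _ (AddSubgroup.subset_closure ha') k

/-- The lattice spanned by the roots of squared length `L` is integral for `⟪·, ·⟫ / L`. -/
theorem IsRootSystem.inner_self_eq_of_mem_closure (hΦ : IsRootSystem Φ)
    (hmax : ∀ x ∈ Φ, ⟪x, x⟫ ≤ L) (hγ : γ ∈ Φ)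
    (hmem : γ ∈ AddSubgroup.closure (rootsOfInnerSelf Φ L)) : ⟪γ, γ⟫ = L := by
  have hpair : ∀ z ∈ rootsOfInnerSelf Φ L, ∀ w ∈ rootsOfInnerSelf Φ L,
      2 * ⟪z, w⟫ ∈ zmultiples L := by
    rintro z ⟨hz, -⟩ w ⟨hw, hwL⟩
    obtain ⟨n, hn⟩ := hΦ.exists_int_pairing hz hw
    exact AddSubgroup.mem_zmultiples_iff.mpr
      ⟨n, by rw [← pairing_mul_inner_self (hΦ.nonzero w hw), hn, hwL, zsmul_eq_mul]⟩
  obtain ⟨k, hk⟩ := AddSubgroup.mem_zmultiples_iff.mp <|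
    inner_self_mem_zmultiples_of_mem_closure hpair
      (fun z hz => AddSubgroup.mem_zmultiples_iff.mpr ⟨1, by rw [hz.2, one_zsmul]⟩) hmem
  rw [zsmul_eq_mul] at hk
  have hpos := hΦ.inner_self_pos hγ
  have hL : 0 < L := hpos.trans_le (hmax γ hγ)
  have hk1 : (k : ℝ) ≤ 1 := le_of_mul_le_mul_right (by linarith [hmax γ hγ]) hL
  have hk0 : (0 : ℝ) < k := pos_of_mul_pos_left (hk ▸ hpos) hL.le
  have : k = 1 := le_antisymm (by exact_mod_cast hk1) (by exact_mod_cast hk0)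
  rw [← hk, this, Int.cast_one, one_mul]

theorem IsIrredSys.smul_mem_closure (hΦ : IsRootSystem Φ) (hirr : IsIrredSys Φ) {x b : V}
    (hx : x ∈ Φ) (hb : b ∈ Φ) (hlt : ⟪b, b⟫ < ⟪x, x⟫) :
    (⟪x, x⟫ / ⟪b, b⟫) • b ∈ AddSubgroup.closure (rootsOfInnerSelf Φ ⟪x, x⟫) := by
  obtain ⟨z, hz, hzx, hzb⟩ := hirr.exists_inner_self_eq_inner_ne_zero hΦ hx hb
  -- `z - s_b z` is `±(⟪x, x⟫ / ⟪b, b⟫) • b`, a difference of two roots as long as `x`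
  have hdiff : pairing z b • b ∈ AddSubgroup.closure (rootsOfInnerSelf Φ ⟪x, x⟫) := by
    rw [← sub_reflection]
    exact AddSubgroup.sub_mem _ (AddSubgroup.subset_closure ⟨hz, hzx⟩)
      (AddSubgroup.subset_closure ⟨hΦ.reflection_mem hb hz,
        (hΦ.inner_self_reflection hb z).trans hzx⟩)
  rcases hΦ.pairing_eq_or_eq_neg_of_lt hz hb (by rwa [hzx]) hzb with h | h <;>
    rw [h, hzx] at hdiff
  · exact hdiff
  · simpa using AddSubgroup.neg_mem _ hdiff

theorem IsRootSystem.isGreatest_inner_self_div (hΦ : IsRootSystem Φ) {x y : V} (hx : x ∈ Φ)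
    (hy : y ∈ Φ) (hmax : ∀ w ∈ Φ, ⟪w, w⟫ ≤ ⟪x, x⟫) (hmin : ∀ w ∈ Φ, ⟪y, y⟫ ≤ ⟪w, w⟫) :
    IsGreatest {r : ℝ | ∃ u ∈ Φ, ∃ v ∈ Φ, r = ⟪u, u⟫ / ⟪v, v⟫} (⟪x, x⟫ / ⟪y, y⟫) := by
  refine ⟨⟨x, hx, y, hy, rfl⟩, ?_⟩
  rintro _ ⟨u, hu, v, hv, rfl⟩
  exact div_le_div₀ (hΦ.inner_self_pos hx).le (hmax u hu) (hΦ.inner_self_pos hy) (hmin v hv)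

theorem IsIrredSys.inner_self_eq_iff_coord_mem_zmultiples (hΦ : IsRootSystem Φ)
    (hB : IsBase Φ Δ c) (hirr : IsIrredSys Φ) {x y : V} (hx : x ∈ Φ) (hy : y ∈ Φ)
    (hmax : ∀ w ∈ Φ, ⟪w, w⟫ ≤ ⟪x, x⟫) (hmin : ∀ w ∈ Φ, ⟪y, y⟫ ≤ ⟪w, w⟫) (hγ : γ ∈ Φ) :
    ⟪γ, γ⟫ = ⟪x, x⟫ ↔
      ∀ a ∈ Δ, ⟪a, a⟫ < ⟪x, x⟫ → c γ a ∈ zmultiples (⟪x, x⟫ / ⟪y, y⟫) := by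
  have hshort : ∀ a ∈ Φ, ⟪a, a⟫ < ⟪x, x⟫ → ⟪a, a⟫ = ⟪y, y⟫ := fun a ha h =>
    (hirr.inner_self_eq_or_eq hΦ hy hx hmin hmax ha).resolve_right h.ne
  constructor
  · refine hB.coord_mem_zmultiples hΦ (fun z hz hzx a ha hax => ?_) hγ
    rw [← hshort a (hB.subset ha) hax, ← hzx]
    exact hΦ.pairing_mem_zmultiples_of_lt hz (hB.subset ha) (hzx ▸ hax)
  · refine fun hdiv => hΦ.inner_self_eq_of_mem_closure hmax hγ
      (hB.mem_closure_of_coord_mem_zmultiples hmax (fun a ha hax => ?_) hγ hdiv)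
    rw [← hshort a (hB.subset ha) hax]
    exact hirr.smul_mem_closure hΦ hx (hB.subset ha) hax

end

end

/-- A root is long iff its coordinate on every short simple root is an integer multiple
of the lacing number `ℓ` of `Φ`. -/
theorem stmt11 (Φ Δ : Finset E) (c : E → E → ℝ)
    (hΦ : IsRootSystem Φ) (hB : IsBase Φ Δ c) (hirr : IsIrredSys Φ)
    (ℓ : ℝ)
    (hlace : IsGreatest {r : ℝ | ∃ x ∈ Φ, ∃ y ∈ Φ, r = ⟪x, x⟫ / ⟪y, y⟫} ℓ)
    (γ : E) (hγ : γ ∈ Φ) :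
    (∀ δ ∈ Φ, ‖δ‖ ≤ ‖γ‖) ↔
      (∀ a ∈ Δ, (∃ δ ∈ Φ, ‖a‖ < ‖δ‖) → ∃ n : ℤ, c γ a = ℓ * (n : ℝ)) := by
  obtain ⟨xL, hxL, hmax⟩ := Φ.exists_max_image (fun x => ⟪x, x⟫) ⟨γ, hγ⟩
  obtain ⟨xS, hxS, hmin⟩ := Φ.exists_min_image (fun x => ⟪x, x⟫) ⟨γ, hγ⟩
  have hℓ : ℓ = ⟪xL, xL⟫ / ⟪xS, xS⟫ :=
    hlace.unique (hΦ.isGreatest_inner_self_div hxL hxS hmax hmin)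
  have hlong : (∀ δ ∈ Φ, ‖δ‖ ≤ ‖γ‖) ↔ ⟪γ, γ⟫ = ⟪xL, xL⟫ := by
    simp only [norm_le_norm_iff_inner_self_le]
    exact ⟨fun h => le_antisymm (hmax γ hγ) (h xL hxL), fun h δ hδ => h ▸ hmax δ hδ⟩
  have hlonger : ∀ a : E, (∃ δ ∈ Φ, ‖a‖ < ‖δ‖) ↔ ⟪a, a⟫ < ⟪xL, xL⟫ := fun a => by
    simp only [norm_lt_norm_iff_inner_self_lt]
    exact ⟨fun ⟨δ, hδ, h⟩ => h.trans_le (hmax δ hδ), fun h => ⟨xL, hxL, h⟩⟩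
  have hmul : ∀ t : ℝ, (∃ n : ℤ, t = ℓ * n) ↔ t ∈ zmultiples ℓ := fun t => by
    simp only [AddSubgroup.mem_zmultiples_iff, zsmul_eq_mul, mul_comm ℓ, eq_comm]
  rw [hlong]
  simp only [hlonger, hmul]
  rw [hℓ]
  exact hirr.inner_self_eq_iff_coord_mem_zmultiples hΦ hB hxL hxS hmax hmin hγ
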